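/- Let J be an integrable almost complex structure on a differential *-calculus (Ω•A, d, *), and suppose that for all p, q ≥ 0 the multiplication map ∧ : Ω^{0,q}A ⊗_A Ω^{p,0}A → Ω^{p,q}A is an isomorphism, with inverse Θ^{p,q}. Then for each p the map ∇̄ := Θ^{p,1}∘∂̄ : Ω^{p,0}A → Ω^{0,1}A ⊗_A Ω^{p,0}A is a ∂̄-operator with vanishing holomorphic curvature, so (Ω^{p,0}A, ∇̄) is a holomorphic left A-module; moreover the p-th Dolbeault complex (Ω^{p,•}A, ∂̄) is isomorphic, as a complex, to the complex (Ω^{0,•}A ⊗_A Ω^{p,0}A, ∇̄), via the multiplication maps ∧. -/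

import Mathlib

noncomputable section

open scoped TensorProduct

/-- A differential `*`-calculus `(Ω•A, d, *)` on the `*`-algebra `A = G 0`:
an ℕ-graded associative ℂ-algebra `Ω` with `Ω⁰A = A = G 0`, generation
`Ωⁿ⁺¹A = A·d(ΩⁿA)`, a degree-one differential `d` with `d² = 0` satisfying the graded
Leibniz rule, and a grade-preserving conjugate-linear involution `starOp` such that
`(dξ)* = d(ξ*)` and `(ξ∧η)* = (−1)^{|ξ||η|} η*∧ξ*` for homogeneous `ξ`, `η`. -/
structure DiffStarCalc (Ω : Type*) [Ring Ω] [Algebra ℂ Ω] where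
  /-- the grading: `G n` is the space of `n`-forms `ΩⁿA`; `G 0 = A`. -/
  G : ℕ → Submodule ℂ Ω
  internal : DirectSum.IsInternal G
  one_mem : (1 : Ω) ∈ G 0
  mul_mem : ∀ {m n : ℕ} {x y : Ω}, x ∈ G m → y ∈ G n → x * y ∈ G (m + n)
  /-- the differential -/
  d : Ω →ₗ[ℂ] Ω
  d_mem : ∀ (n : ℕ), ∀ x ∈ G n, d x ∈ G (n + 1)
  d_d : ∀ x : Ω, d (d x) = 0
  leibniz : ∀ (n : ℕ), ∀ x ∈ G n, ∀ y : Ω,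
      d (x * y) = d x * y + ((-1 : ℂ) ^ n) • (x * d y)
  gen : ∀ n : ℕ, G (n + 1) ≤ Submodule.span ℂ {z : Ω | ∃ a ∈ G 0, ∃ x ∈ G n, z = a * d x}
  /-- the `*`-operation -/
  starOp : Ω → Ω
  starOp_add : ∀ x y : Ω, starOp (x + y) = starOp x + starOp y
  starOp_smul : ∀ (c : ℂ) (x : Ω), starOp (c • x) = (starRingEnd ℂ) c • starOp x
  starOp_starOp : ∀ x : Ω, starOp (starOp x) = x
  starOp_mem : ∀ (n : ℕ), ∀ x ∈ G n, starOp x ∈ G n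
  starOp_mul : ∀ (m n : ℕ), ∀ x ∈ G m, ∀ y ∈ G n,
      starOp (x * y) = ((-1 : ℂ) ^ (m * n)) • (starOp y * starOp x)
  starOp_d : ∀ x : Ω, starOp (d x) = d (starOp x)

/-- An almost complex structure on a differential `*`-calculus: a degree-zero
ℂ-linear derivation `J` of `Ω•A` vanishing on `A = G 0`, with `J² = −1` on `Ω¹A = G 1`
and `J(ξ*) = (Jξ)*` for `ξ ∈ Ω¹A`. -/
structure AlmostComplexCalc (Ω : Type*) [Ring Ω] [Algebra ℂ Ω] extends DiffStarCalc Ω where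
  /-- the almost complex structure -/
  J : Ω →ₗ[ℂ] Ω
  J_mem : ∀ (n : ℕ), ∀ x ∈ G n, J x ∈ G n
  J_deriv : ∀ x y : Ω, J (x * y) = J x * y + x * J y
  J_zero : ∀ x ∈ G 0, J x = 0
  J_sq : ∀ x ∈ G 1, J (J x) = -x
  J_star : ∀ x ∈ G 1, J (starOp x) = starOp (J x)

namespace AlmostComplexCalc

variable {Ω : Type*} [Ring Ω] [Algebra ℂ Ω]

/-- The space of `(p,q)`-forms `Ω^{p,q}A := {ξ ∈ Ω^{p+q}A : Jξ = (p−q)·i·ξ}`. -/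
def pq (C : AlmostComplexCalc Ω) (p q : ℕ) : Submodule ℂ Ω where
  carrier := {x | x ∈ C.G (p + q) ∧ C.J x = (((p : ℂ) - (q : ℂ)) * Complex.I) • x}
  add_mem' := by
    rintro x y ⟨hx1, hx2⟩ ⟨hy1, hy2⟩
    refine ⟨(C.G (p + q)).add_mem hx1 hy1, ?_⟩
    rw [map_add, hx2, hy2, smul_add]
  zero_mem' := ⟨(C.G (p + q)).zero_mem, by rw [map_zero, smul_zero]⟩
  smul_mem' := by
    rintro c x ⟨hx1, hx2⟩
    refine ⟨(C.G (p + q)).smul_mem c hx1, ?_⟩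
    rw [map_smul, hx2, smul_comm]

theorem mem_pq {C : AlmostComplexCalc Ω} {p q : ℕ} {x : Ω} :
    x ∈ C.pq p q ↔ x ∈ C.G (p + q) ∧ C.J x = (((p : ℂ) - (q : ℂ)) * Complex.I) • x :=
  Iff.rfl

/-- Integrability of the almost complex structure:
`d(Ω^{1,0}A) ⊆ Ω^{2,0}A ⊕ Ω^{1,1}A`. -/
def Integrable (C : AlmostComplexCalc Ω) : Prop :=
  ∀ ω ∈ C.pq 1 0, C.d ω ∈ C.pq 2 0 ⊔ C.pq 1 1

end AlmostComplexCalc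

/-- An almost complex structure together with the projections
`π^{p,q} : Ω^{p+q}A → Ω^{p,q}A` realizing the direct sum decomposition
`ΩⁿA = ⊕_{p+q=n} Ω^{p,q}A`. -/
structure ProjCalc (Ω : Type*) [Ring Ω] [Algebra ℂ Ω] extends AlmostComplexCalc Ω where
  /-- the projection onto the `(p,q)`-summand -/
  π : ℕ → ℕ → (Ω →ₗ[ℂ] Ω)
  π_mem_grade : ∀ (p q : ℕ) (x : Ω), π p q x ∈ G (p + q)
  π_eigen : ∀ (p q : ℕ) (x : Ω),
      J (π p q x) = (((p : ℂ) - (q : ℂ)) * Complex.I) • π p q x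
  π_eq_self : ∀ (p q : ℕ), ∀ x ∈ G (p + q),
      J x = (((p : ℂ) - (q : ℂ)) * Complex.I) • x → π p q x = x
  π_zero_of_ne : ∀ (p q n : ℕ), n ≠ p + q → ∀ x ∈ G n, π p q x = 0
  π_orth : ∀ (p q p' q' : ℕ), (p, q) ≠ (p', q') → ∀ x ∈ G (p' + q'),
      J x = (((p' : ℂ) - (q' : ℂ)) * Complex.I) • x → π p q x = 0
  π_sum : ∀ (n : ℕ), ∀ x ∈ G n, x = ∑ k ∈ Finset.range (n + 1), π k (n - k) x

section TensorMachinery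

variable {Ω : Type*} [Ring Ω] [Algebra ℂ Ω]

/-- The data of a left `A`-module structure on `E`, where `A = G 0` is the degree-zero
part of the calculus: a bilinear action of `Ω` on `E` which is unital and associative
on `A`. -/
structure AModData (C : ProjCalc Ω) (E : Type*) [AddCommGroup E] [Module ℂ E] where
  act : Ω →ₗ[ℂ] E →ₗ[ℂ] E
  act_one : ∀ e : E, act 1 e = e
  act_mul : ∀ a ∈ C.G 0, ∀ b ∈ C.G 0, ∀ e : E, act (a * b) e = act a (act b e)

/-- The subspace of relations defining the balanced tensor product `Ω•A ⊗_A E`. -/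
def relSub (C : ProjCalc Ω) {E : Type*} [AddCommGroup E] [Module ℂ E]
    (M : AModData C E) : Submodule ℂ (Ω ⊗[ℂ] E) :=
  Submodule.span ℂ
    {z : Ω ⊗[ℂ] E | ∃ a ∈ C.G 0, ∃ x : Ω, ∃ e : E,
      z = (x * a) ⊗ₜ[ℂ] e - x ⊗ₜ[ℂ] (M.act a e)}

/-- The balanced tensor product `Ω•A ⊗_A E`. -/
abbrev TP (C : ProjCalc Ω) {E : Type*} [AddCommGroup E] [Module ℂ E]
    (M : AModData C E) :=
  (Ω ⊗[ℂ] E) ⧸ relSub C M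

/-- The class of the elementary tensor `x ⊗ e` in `Ω•A ⊗_A E`. -/
def tp (C : ProjCalc Ω) {E : Type*} [AddCommGroup E] [Module ℂ E]
    (M : AModData C E) (x : Ω) (e : E) : TP C M :=
  Submodule.Quotient.mk (x ⊗ₜ[ℂ] e)

/-- Left multiplication (wedging on the left) by `ξ ∈ Ω•A` on `Ω•A ⊗_A E`. -/
def lmulTP (C : ProjCalc Ω) {E : Type*} [AddCommGroup E] [Module ℂ E]
    (M : AModData C E) (ξ : Ω) : TP C M →ₗ[ℂ] TP C M :=
  Submodule.mapQ (relSub C M) (relSub C M)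
    (LinearMap.rTensor E (LinearMap.mulLeft ℂ ξ)) (by
      unfold relSub
      refine Submodule.span_le.mpr ?_
      rintro z ⟨a, ha, x, e, rfl⟩
      simp only [SetLike.mem_coe, Submodule.mem_comap, map_sub, LinearMap.rTensor_tmul,
        LinearMap.mulLeft_apply]
      rw [show ξ * (x * a) = (ξ * x) * a from (mul_assoc ξ x a).symm]
      exact Submodule.subset_span ⟨a, ha, ξ * x, e, rfl⟩)

/-- The map `Ω•A ⊗_A E → Ω•A ⊗_A F` induced by an `A`-module map `φ : E → F`. -/
def TPmap (C : ProjCalc Ω) {E F : Type*} [AddCommGroup E] [Module ℂ E]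
    [AddCommGroup F] [Module ℂ F] (M : AModData C E) (N : AModData C F)
    (φ : E →ₗ[ℂ] F) (hφ : ∀ a ∈ C.G 0, ∀ e : E, φ (M.act a e) = N.act a (φ e)) :
    TP C M →ₗ[ℂ] TP C N :=
  Submodule.mapQ (relSub C M) (relSub C N) (LinearMap.lTensor Ω φ) (by
    unfold relSub
    refine Submodule.span_le.mpr ?_
    rintro z ⟨a, ha, x, e, rfl⟩
    simp only [SetLike.mem_coe, Submodule.mem_comap, map_sub, LinearMap.lTensor_tmul]
    rw [hφ a ha]
    exact Submodule.subset_span ⟨a, ha, x, φ e, rfl⟩)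

/-- The image of `Ω^{0,q}A ⊗_A E` inside `Ω•A ⊗_A E`. -/
def TPdeg (C : ProjCalc Ω) {E : Type*} [AddCommGroup E] [Module ℂ E]
    (M : AModData C E) (q : ℕ) : Submodule ℂ (TP C M) :=
  Submodule.span ℂ {z : TP C M | ∃ ξ ∈ C.pq 0 q, ∃ e : E, z = tp C M ξ e}

/-- The image of `ΩⁿA ⊗_A E` inside `Ω•A ⊗_A E`. -/
def TPdegTot (C : ProjCalc Ω) {E : Type*} [AddCommGroup E] [Module ℂ E]
    (M : AModData C E) (n : ℕ) : Submodule ℂ (TP C M) :=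
  Submodule.span ℂ {z : TP C M | ∃ x ∈ C.G n, ∃ e : E, z = tp C M x e}

/-- A `∂̄`-operator on a left `A`-module `E`: a ℂ-linear map
`∇̄ : E → Ω^{0,1}A ⊗_A E` with `∇̄(a·e) = ∂̄a ⊗ e + a·∇̄e` for all `a ∈ A`. -/
structure DbarOp (C : ProjCalc Ω) {E : Type*} [AddCommGroup E] [Module ℂ E]
    (M : AModData C E) where
  nabla : E →ₗ[ℂ] TP C M
  mem_deg : ∀ e : E, nabla e ∈ TPdeg C M 1
  leibniz : ∀ a ∈ C.G 0, ∀ e : E,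
      nabla (M.act a e) = tp C M (C.π 0 1 (C.d a)) e + lmulTP C M a (nabla e)

/-- The extension of a `∂̄`-operator to the higher degree parts
`Ω^{0,q}A ⊗_A E → Ω^{0,q+1}A ⊗_A E`, characterized by
`∇̄(ξ⊗e) = ∂̄ξ ⊗ e + (−1)^q ξ ∧ ∇̄e`. -/
structure DbarExt (C : ProjCalc Ω) {E : Type*} [AddCommGroup E] [Module ℂ E]
    {M : AModData C E} (D : DbarOp C M) where
  N : ℕ → (TP C M →ₗ[ℂ] TP C M)
  compat : ∀ (q : ℕ), ∀ ξ ∈ C.pq 0 q, ∀ e : E,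
      N q (tp C M ξ e) = tp C M (C.π 0 (q + 1) (C.d ξ)) e
        + ((-1 : ℂ) ^ q) • lmulTP C M ξ (D.nabla e)

end TensorMachinery

/-- The multiplication (wedge) map `Ω•A ⊗_A Ω^{p,0}A → Ω•A`, `ξ ⊗ η ↦ ξ ∧ η`. -/
def wedgeE {Ω : Type*} [Ring Ω] [Algebra ℂ Ω] (C : ProjCalc Ω) (p : ℕ)
    (Mp : AModData C ↥(C.pq p 0))
    (hact : ∀ a ∈ C.G 0, ∀ e : ↥(C.pq p 0), ((Mp.act a e : Ω)) = a * (e : Ω)) :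
    TP C Mp →ₗ[ℂ] Ω :=
  Submodule.liftQ (relSub C Mp)
    ((LinearMap.mul' ℂ Ω).comp (LinearMap.lTensor Ω (C.pq p 0).subtype)) (by
      unfold relSub
      refine Submodule.span_le.mpr ?_
      rintro z ⟨a, ha, x, e, rfl⟩
      simp only [SetLike.mem_coe, LinearMap.mem_ker, map_sub, LinearMap.comp_apply,
        LinearMap.lTensor_tmul, LinearMap.mul'_apply, Submodule.coe_subtype, hact a ha]
      rw [mul_assoc, sub_self])

/-!
Both halves of the theorem are statements about `∂̄` on the Dolbeault side, carried over to the
tensor side along the bijections `∧`. The `(p, q+1)`-component of the Leibniz rule gives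
`∂̄(ξ ∧ e) = ∂̄ξ ∧ e + (-1)^q ξ ∧ ∂̄e` for `ξ ∈ Ω^{0,q}` and `e ∈ Ω^{p,0}`, so `∧` intertwines
`∇̄` with `∂̄`; since `∧` is injective, the `∂̄`-Leibniz rule for `∇̄` follows. Integrability gives
`d(Ω^{r,0}) ⊆ Ω^{r+1,0} ⊕ Ω^{r,1}` for every `r`, by induction on `r`, because `Ω^{r+1,0}` is
spanned by products of `(1,0)`-forms with `(r,0)`-forms. Hence `∂̄² = 0` on `Ω^{p,0}`, and the
holomorphic curvature `∇̄²`, which `∧` carries to `∂̄²`, vanishes.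
-/

namespace ProjCalc

variable {Ω : Type*} [Ring Ω] [Algebra ℂ Ω] (C : ProjCalc Ω)

theorem mul_mem_pq {a b c d : ℕ} {x y : Ω} (hx : x ∈ C.pq a b) (hy : y ∈ C.pq c d) :
    x * y ∈ C.pq (a + c) (b + d) := by
  refine ⟨?_, ?_⟩
  · convert C.mul_mem hx.1 hy.1 using 2
    ring
  · rw [C.J_deriv, hx.2, hy.2, smul_mul_assoc, mul_smul_comm, ← add_smul]
    congr 1
    push_cast
    ring

theorem pq_mul_pq_le {a b c d k l : ℕ} (hk : a + c = k) (hl : b + d = l) :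
    C.pq a b * C.pq c d ≤ C.pq k l :=
  Submodule.mul_le.2 fun _ hx _ hy => hk ▸ hl ▸ C.mul_mem_pq hx hy

theorem mem_pq_zero_zero {a : Ω} (ha : a ∈ C.G 0) : a ∈ C.pq 0 0 :=
  ⟨ha, by rw [C.J_zero a ha]; simp⟩

theorem proj_mem_pq (a b : ℕ) (x : Ω) : C.π a b x ∈ C.pq a b :=
  ⟨C.π_mem_grade a b x, C.π_eigen a b x⟩

theorem proj_eq_self_of_mem {a b : ℕ} {x : Ω} (h : x ∈ C.pq a b) : C.π a b x = x :=
  C.π_eq_self a b x h.1 h.2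

theorem proj_eq_zero_of_mem {a b c d : ℕ} {x : Ω} (h : x ∈ C.pq c d) (hne : (a, b) ≠ (c, d)) :
    C.π a b x = 0 :=
  C.π_orth a b c d hne x h.1 h.2

theorem proj_eq_zero_of_mem_sup {a b c d k l : ℕ} {x : Ω} (h : x ∈ C.pq a b ⊔ C.pq c d)
    (hab : (k, l) ≠ (a, b)) (hcd : (k, l) ≠ (c, d)) : C.π k l x = 0 := by
  obtain ⟨u, hu, v, hv, rfl⟩ := Submodule.mem_sup.1 h
  rw [map_add, C.proj_eq_zero_of_mem hu hab, C.proj_eq_zero_of_mem hv hcd, add_zero]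

theorem eq_proj_add_proj_of_mem_one {y : Ω} (hy : y ∈ C.G 1) :
    y = C.π 1 0 y + C.π 0 1 y := by
  conv_lhs => rw [C.π_sum 1 y hy]
  simp [Finset.sum_range_succ, add_comm]

theorem proj_mul_of_mem_left {a b n k m c e : ℕ} {ξ y : Ω} (hξ : ξ ∈ C.pq a b)
    (hy : y ∈ C.G n) (hkm : k + m = n) (hc : a + k = c) (he : b + m = e) :
    C.π c e (ξ * y) = ξ * C.π k m y := by
  conv_lhs => rw [C.π_sum n y hy, Finset.mul_sum, map_sum]
  rw [Finset.sum_eq_single k, show n - k = m by omega, ← hc, ← he]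
  · exact C.proj_eq_self_of_mem (C.mul_mem_pq hξ (C.proj_mem_pq k m y))
  · intro j hj hjk
    refine C.proj_eq_zero_of_mem (C.mul_mem_pq hξ (C.proj_mem_pq _ _ y)) ?_
    have := Finset.mem_range.1 hj
    simp only [ne_eq, Prod.mk.injEq]
    omega
  · exact fun hk => absurd (Finset.mem_range.2 (by omega)) hk

theorem proj_mul_of_mem_right {a b n k m c e : ℕ} {y η : Ω} (hy : y ∈ C.G n)
    (hη : η ∈ C.pq a b) (hkm : k + m = n) (hc : k + a = c) (he : m + b = e) :
    C.π c e (y * η) = C.π k m y * η := by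
  conv_lhs => rw [C.π_sum n y hy, Finset.sum_mul, map_sum]
  rw [Finset.sum_eq_single k, show n - k = m by omega, ← hc, ← he]
  · exact C.proj_eq_self_of_mem (C.mul_mem_pq (C.proj_mem_pq k m y) hη)
  · intro j hj hjk
    refine C.proj_eq_zero_of_mem (C.mul_mem_pq (C.proj_mem_pq _ _ y) hη) ?_
    have := Finset.mem_range.1 hj
    simp only [ne_eq, Prod.mk.injEq]
    omega
  · exact fun hk => absurd (Finset.mem_range.2 (by omega)) hk

theorem proj_mul_eq_zero_of_lt {a b n c e : ℕ} {ξ y : Ω} (hξ : ξ ∈ C.pq a b) (hy : y ∈ C.G n)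
    (he : e < b) : C.π c e (ξ * y) = 0 := by
  rw [C.π_sum n y hy, Finset.mul_sum, map_sum]
  refine Finset.sum_eq_zero fun j _ => C.proj_eq_zero_of_mem
    (C.mul_mem_pq hξ (C.proj_mem_pq _ _ y)) ?_
  simp only [ne_eq, Prod.mk.injEq]
  omega

theorem proj_d_mul {p q : ℕ} {ξ e : Ω} (hξ : ξ ∈ C.pq 0 q) (he : e ∈ C.pq p 0) :
    C.π p (q + 1) (C.d (ξ * e)) =
      C.π 0 (q + 1) (C.d ξ) * e + ((-1 : ℂ) ^ q) • (ξ * C.π p 1 (C.d e)) := by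
  have hξG : ξ ∈ C.G q := by simpa using hξ.1
  have hdξ : C.π p (q + 1) (C.d ξ * e) = C.π 0 (q + 1) (C.d ξ) * e :=
    C.proj_mul_of_mem_right (C.d_mem q ξ hξG) he (by omega) (by omega) (by omega)
  have hde : C.π p (q + 1) (ξ * C.d e) = ξ * C.π p 1 (C.d e) :=
    C.proj_mul_of_mem_left hξ (C.d_mem p e he.1) (by omega) (by omega) (by omega)
  rw [C.leibniz q ξ hξG e, map_add, map_smul, hdξ, hde]

theorem proj_d_mem_pq_one_zero_mul : ∀ {r : ℕ} {w : Ω}, w ∈ C.G r →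
    C.π (r + 1) 0 (C.d w) ∈ C.pq 1 0 * C.pq r 0
  | 0, w, _ => by
    rw [← mul_one (C.π 1 0 (C.d w))]
    exact Submodule.mul_mem_mul (C.proj_mem_pq 1 0 _) (C.mem_pq_zero_zero C.one_mem)
  | s + 1, w, hw => by
    have hgen : C.G (s + 1) ≤
        (C.pq 1 0 * C.pq (s + 1) 0).comap (C.π (s + 1 + 1) 0 ∘ₗ C.d) := by
      refine (C.gen s).trans (Submodule.span_le.2 ?_)
      rintro _ ⟨b, hb, v, hv, rfl⟩
      have hd : C.d (b * C.d v) = C.d b * C.d v := by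
        simp [C.leibniz 0 b hb, C.d_d]
      have hdv := C.d_mem s v hv
      have hdbar : C.π (s + 1 + 1) 0 (C.π 0 1 (C.d b) * C.d v) = 0 :=
        C.proj_mul_eq_zero_of_lt (C.proj_mem_pq 0 1 _) hdv zero_lt_one
      have hpartial : C.π (s + 1 + 1) 0 (C.π 1 0 (C.d b) * C.d v) =
          C.π 1 0 (C.d b) * C.π (s + 1) 0 (C.d v) :=
        C.proj_mul_of_mem_left (C.proj_mem_pq 1 0 _) hdv (by omega) (by omega) (by omega)
      simp only [SetLike.mem_coe, Submodule.mem_comap, LinearMap.comp_apply, hd]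
      rw [C.eq_proj_add_proj_of_mem_one (C.d_mem 0 b hb), add_mul, map_add, hdbar, add_zero,
        hpartial]
      exact Submodule.mul_mem_mul (C.proj_mem_pq 1 0 _) (C.proj_mem_pq _ _ _)
    exact hgen hw

theorem pq_succ_zero_le_mul (r : ℕ) : C.pq (r + 1) 0 ≤ C.pq 1 0 * C.pq r 0 := by
  have hgen : C.G (r + 1) ≤ (C.pq 1 0 * C.pq r 0).comap (C.π (r + 1) 0) := by
    refine (C.gen r).trans (Submodule.span_le.2 ?_)
    rintro _ ⟨a, ha, w, hw, rfl⟩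
    have hmul := Submodule.mul_mem_mul (C.mem_pq_zero_zero ha) (C.proj_d_mem_pq_one_zero_mul hw)
    rw [← mul_assoc] at hmul
    have hA : C.π (r + 1) 0 (a * C.d w) = a * C.π (r + 1) 0 (C.d w) :=
      C.proj_mul_of_mem_left (C.mem_pq_zero_zero ha) (C.d_mem r w hw) (by omega) (by omega)
        (by omega)
    rw [SetLike.mem_coe, Submodule.mem_comap, hA]
    have hA0 : C.pq 0 0 * C.pq 1 0 ≤ C.pq 1 0 := C.pq_mul_pq_le (by omega) (by omega)
    exact mul_le_mul_left hA0 _ hmul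
  intro x hx
  rw [← C.proj_eq_self_of_mem hx]
  exact hgen hx.1

theorem d_mem_of_mem_pq_zero (hint : C.Integrable) :
    ∀ {r : ℕ} {ω : Ω}, ω ∈ C.pq r 0 → C.d ω ∈ C.pq (r + 1) 0 ⊔ C.pq r 1
  | 0, ω, hω => by
    rw [C.eq_proj_add_proj_of_mem_one (C.d_mem 0 ω hω.1)]
    exact add_mem (Submodule.mem_sup_left (C.proj_mem_pq 1 0 _))
      (Submodule.mem_sup_right (C.proj_mem_pq 0 1 _))
  | r + 1, ω, hω => by
    refine Submodule.mul_induction_on (C.pq_succ_zero_le_mul r hω) (fun η hη y hy => ?_)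
      (fun _ _ hx hy => map_add C.d _ _ ▸ add_mem hx hy)
    have hdη : C.d η * y ∈ C.pq 2 0 * C.pq r 0 ⊔ C.pq 1 1 * C.pq r 0 := by
      rw [← Submodule.sup_mul]
      exact Submodule.mul_mem_mul (hint η hη) hy
    have hηd : η * C.d y ∈ C.pq 1 0 * C.pq (r + 1) 0 ⊔ C.pq 1 0 * C.pq r 1 := by
      rw [← Submodule.mul_sup]
      exact Submodule.mul_mem_mul hη (d_mem_of_mem_pq_zero hint hy)
    have h20 : C.pq 2 0 * C.pq r 0 ≤ C.pq (r + 1 + 1) 0 := C.pq_mul_pq_le (by omega) rfl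
    have h11 : C.pq 1 1 * C.pq r 0 ≤ C.pq (r + 1) 1 := C.pq_mul_pq_le (by omega) rfl
    have h10 : C.pq 1 0 * C.pq (r + 1) 0 ≤ C.pq (r + 1 + 1) 0 := C.pq_mul_pq_le (by omega) rfl
    have h01 : C.pq 1 0 * C.pq r 1 ≤ C.pq (r + 1) 1 := C.pq_mul_pq_le (by omega) rfl
    rw [C.leibniz 1 η hη.1 y]
    exact add_mem (sup_le_sup h20 h11 hdη) (Submodule.smul_mem _ _ (sup_le_sup h10 h01 hηd))

theorem proj_d_proj_d_eq_zero (hint : C.Integrable) {p : ℕ} {e : Ω} (he : e ∈ C.pq p 0) :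
    C.π p 2 (C.d (C.π p 1 (C.d e))) = 0 := by
  obtain ⟨u, hu, v, hv, huv⟩ := Submodule.mem_sup.1 (C.d_mem_of_mem_pq_zero hint he)
  have hdbar : C.π p 1 (C.d e) = v := by
    rw [← huv, map_add, C.proj_eq_zero_of_mem hu (by simp), zero_add, C.proj_eq_self_of_mem hv]
  have hdv : C.d v = -C.d u := eq_neg_of_add_eq_zero_right (by rw [← map_add, huv, C.d_d])
  rw [hdbar, hdv, map_neg,
    C.proj_eq_zero_of_mem_sup (C.d_mem_of_mem_pq_zero hint hu) (by simp) (by simp), neg_zero]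

end ProjCalc

section TensorSide

variable {Ω : Type*} [Ring Ω] [Algebra ℂ Ω] (C : ProjCalc Ω) {E : Type*} [AddCommGroup E]
  [Module ℂ E]

theorem tp_mem_TPdeg (M : AModData C E) {q : ℕ} {ξ : Ω} (hξ : ξ ∈ C.pq 0 q) (e : E) :
    tp C M ξ e ∈ TPdeg C M q :=
  Submodule.subset_span ⟨ξ, hξ, e, rfl⟩

theorem lmulTP_mem_TPdeg (M : AModData C E) {b q : ℕ} {ξ : Ω} (hξ : ξ ∈ C.pq 0 b)
    {z : TP C M} (hz : z ∈ TPdeg C M q) : lmulTP C M ξ z ∈ TPdeg C M (b + q) := by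
  have hle : TPdeg C M q ≤ (TPdeg C M (b + q)).comap (lmulTP C M ξ) := by
    refine Submodule.span_le.2 ?_
    rintro _ ⟨η, hη, e, rfl⟩
    exact tp_mem_TPdeg C M (C.mul_mem_pq hξ hη) e
  exact hle hz

theorem dbarExt_mem_TPdeg {M : AModData C E} {Dn : E →ₗ[ℂ] TP C M}
    (hDn : ∀ e : E, Dn e ∈ TPdeg C M 1) {NB : ℕ → (TP C M →ₗ[ℂ] TP C M)}
    (hNB : ∀ (q : ℕ), ∀ ξ ∈ C.pq 0 q, ∀ e : E,
      NB q (tp C M ξ e) = tp C M (C.π 0 (q + 1) (C.d ξ)) e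
        + ((-1 : ℂ) ^ q) • lmulTP C M ξ (Dn e))
    {q : ℕ} {z : TP C M} (hz : z ∈ TPdeg C M q) : NB q z ∈ TPdeg C M (q + 1) := by
  have hle : TPdeg C M q ≤ (TPdeg C M (q + 1)).comap (NB q) := by
    refine Submodule.span_le.2 ?_
    rintro _ ⟨ξ, hξ, e, rfl⟩
    rw [SetLike.mem_coe, Submodule.mem_comap, hNB q ξ hξ e]
    exact add_mem (tp_mem_TPdeg C M (C.proj_mem_pq _ _ _) e)
      (Submodule.smul_mem _ _ (lmulTP_mem_TPdeg C M hξ (hDn e)))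
  exact hle hz

variable {p : ℕ} {Mp : AModData C ↥(C.pq p 0)}
  {hact : ∀ a ∈ C.G 0, ∀ e : ↥(C.pq p 0), ((Mp.act a e : Ω)) = a * (e : Ω)}

theorem wedgeE_tp (x : Ω) (e : ↥(C.pq p 0)) : wedgeE C p Mp hact (tp C Mp x e) = x * e :=
  rfl

theorem wedgeE_lmulTP (ξ : Ω) (z : TP C Mp) :
    wedgeE C p Mp hact (lmulTP C Mp ξ z) = ξ * wedgeE C p Mp hact z := by
  obtain ⟨t, rfl⟩ := Submodule.Quotient.mk_surjective _ z
  induction t using TensorProduct.induction_on with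
  | zero => simp
  | tmul x e => exact mul_assoc ξ x e
  | add u v hu hv => rw [Submodule.Quotient.mk_add, map_add, map_add, map_add, hu, hv, mul_add]

theorem mapsTo_wedgeE (q : ℕ) : Set.MapsTo (wedgeE C p Mp hact) (TPdeg C Mp q) (C.pq p q) := by
  have hle : TPdeg C Mp q ≤ (C.pq p q).comap (wedgeE C p Mp hact) := by
    refine Submodule.span_le.2 ?_
    rintro _ ⟨ξ, hξ, e, rfl⟩
    rw [SetLike.mem_coe, Submodule.mem_comap, wedgeE_tp]
    simpa using C.mul_mem_pq hξ e.2
  exact fun _ hz => hle hz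

theorem proj_d_wedgeE {Dn : ↥(C.pq p 0) →ₗ[ℂ] TP C Mp}
    (hDn : ∀ e : ↥(C.pq p 0), wedgeE C p Mp hact (Dn e) = C.π p 1 (C.d (e : Ω)))
    {NB : ℕ → (TP C Mp →ₗ[ℂ] TP C Mp)}
    (hNB : ∀ (q : ℕ), ∀ ξ ∈ C.pq 0 q, ∀ e : ↥(C.pq p 0),
      NB q (tp C Mp ξ e) = tp C Mp (C.π 0 (q + 1) (C.d ξ)) e
        + ((-1 : ℂ) ^ q) • lmulTP C Mp ξ (Dn e))
    {q : ℕ} {z : TP C Mp} (hz : z ∈ TPdeg C Mp q) :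
    C.π p (q + 1) (C.d (wedgeE C p Mp hact z)) = wedgeE C p Mp hact (NB q z) := by
  refine LinearMap.eqOn_span' (f := C.π p (q + 1) ∘ₗ C.d ∘ₗ wedgeE C p Mp hact)
    (g := wedgeE C p Mp hact ∘ₗ NB q) ?_ hz
  rintro _ ⟨ξ, hξ, e, rfl⟩
  simp only [LinearMap.comp_apply, wedgeE_tp, hNB q ξ hξ e, map_add, map_smul, wedgeE_lmulTP,
    hDn]
  exact C.proj_d_mul hξ e.2

end TensorSide

/-- Let `J` be an integrable almost complex structure on a
differential `*`-calculus `(Ω•A, d, *)`, and suppose that for all `q ≥ 0` the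
multiplication map `∧ : Ω^{0,q}A ⊗_A Ω^{p,0}A → Ω^{p,q}A` is an isomorphism (with
inverse `Θ^{p,q}`).  Then the map `∇̄ := Θ^{p,1}∘∂̄ : Ω^{p,0}A → Ω^{0,1}A ⊗_A Ω^{p,0}A`
(given here as the data `Dn` characterized by `Dn ω ∈ Ω^{0,1}A ⊗_A Ω^{p,0}A` and
`∧(Dn ω) = ∂̄ω`) is a `∂̄`-operator with vanishing holomorphic curvature, so
`(Ω^{p,0}A, ∇̄)` is a holomorphic left `A`-module; moreover the `p`-th Dolbeault
complex `(Ω^{p,•}A, ∂̄)` is isomorphic, as a complex, to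
`(Ω^{0,•}A ⊗_A Ω^{p,0}A, ∇̄)`, via the multiplication maps `∧`. -/
theorem statement17 {Ω : Type*} [Ring Ω] [Algebra ℂ Ω] (C : ProjCalc Ω)
    (hint : C.Integrable) (p : ℕ)
    -- the left A-module Ω^{p,0}A
    (Mp : AModData C ↥(C.pq p 0))
    (hact : ∀ a ∈ C.G 0, ∀ e : ↥(C.pq p 0), ((Mp.act a e : Ω)) = a * (e : Ω))
    -- hypothesis: ∧ : Ω^{0,q}A ⊗_A Ω^{p,0}A → Ω^{p,q}A is an isomorphism for all q
    (hTheta : ∀ q : ℕ,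
      (∀ z ∈ TPdeg C Mp q, wedgeE C p Mp hact z = 0 → z = 0) ∧
      (∀ ω ∈ C.pq p q, ∃ z ∈ TPdeg C Mp q, wedgeE C p Mp hact z = ω))
    -- the map ∇̄ := Θ^{p,1}∘∂̄
    (Dn : ↥(C.pq p 0) →ₗ[ℂ] TP C Mp)
    (hDn : ∀ e : ↥(C.pq p 0),
      Dn e ∈ TPdeg C Mp 1 ∧ wedgeE C p Mp hact (Dn e) = C.π p 1 (C.d (e : Ω)))
    -- the extension of ∇̄ to Ω^{0,q}A ⊗_A Ω^{p,0}A: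
    -- ∇̄(ξ⊗e) = ∂̄ξ ⊗ e + (−1)^q ξ ∧ ∇̄e
    (NB : ℕ → (TP C Mp →ₗ[ℂ] TP C Mp))
    (hNB : ∀ (q : ℕ), ∀ ξ ∈ C.pq 0 q, ∀ e : ↥(C.pq p 0),
      NB q (tp C Mp ξ e) = tp C Mp (C.π 0 (q + 1) (C.d ξ)) e
        + ((-1 : ℂ) ^ q) • lmulTP C Mp ξ (Dn e)) :
    -- ∇̄ satisfies the ∂̄-Leibniz rule, so it is a ∂̄-operator on Ω^{p,0}A
    (∀ a ∈ C.G 0, ∀ e : ↥(C.pq p 0),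
        Dn (Mp.act a e) = tp C Mp (C.π 0 1 (C.d a)) e + lmulTP C Mp a (Dn e))
    -- its holomorphic curvature vanishes, i.e. (Ω^{p,0}A, ∇̄) is holomorphic
    ∧ (∀ e : ↥(C.pq p 0), NB 1 (Dn e) = 0)
    -- the multiplication maps ∧ intertwine ∇̄ with ∂̄ ...
    ∧ (∀ q : ℕ, ∀ z ∈ TPdeg C Mp q,
        C.π p (q + 1) (C.d (wedgeE C p Mp hact z)) = wedgeE C p Mp hact (NB q z))
    -- ... and are bijections Ω^{0,q}A ⊗_A Ω^{p,0}A → Ω^{p,q}A, giving an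
    ∧ (∀ q : ℕ, Set.BijOn (wedgeE C p Mp hact) (TPdeg C Mp q) (C.pq p q)) := by
  have hinj : ∀ q, Set.InjOn (wedgeE C p Mp hact) (TPdeg C Mp q) := fun q =>
    LinearMap.injOn_of_disjoint_ker subset_rfl (Submodule.disjoint_def.2 (hTheta q).1)
  have hcomm : ∀ q : ℕ, ∀ z ∈ TPdeg C Mp q,
      C.π p (q + 1) (C.d (wedgeE C p Mp hact z)) = wedgeE C p Mp hact (NB q z) :=
    fun q z hz => proj_d_wedgeE C (fun e => (hDn e).2) hNB hz
  refine ⟨fun a ha e => ?_, fun e => ?_, hcomm,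
    fun q => ⟨mapsTo_wedgeE C q, hinj q, fun ω hω => (hTheta q).2 ω hω⟩⟩
  · have hlmul : lmulTP C Mp a (Dn e) ∈ TPdeg C Mp 1 := by
      simpa using lmulTP_mem_TPdeg C Mp (C.mem_pq_zero_zero ha) (hDn e).1
    refine hinj 1 (hDn _).1 (add_mem (tp_mem_TPdeg C Mp (C.proj_mem_pq 0 1 _) e) hlmul) ?_
    rw [map_add, wedgeE_lmulTP, wedgeE_tp, (hDn _).2, (hDn e).2, hact a ha e]
    simpa using C.proj_d_mul (C.mem_pq_zero_zero ha) e.2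
  · refine (hTheta 2).1 _ (dbarExt_mem_TPdeg C (fun e => (hDn e).1) hNB (hDn e).1) ?_
    rw [← hcomm 1 _ (hDn e).1, (hDn e).2]
    exact C.proj_d_proj_d_eq_zero hint e.2
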